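/- (Main theorem, part (iii): absence of eigenvalues on the wrong side of the continuum.) Let d ≥ 1 and K ∈ T^d. If μ < 0, then for every symmetric f ∈ L²(T^d × T^d) one has ⟨H_μ(K)f, f⟩ ≤ E_max(K)·‖f‖², and consequently H_μ(K) has no eigenvalue z > E_max(K) with a symmetric eigenfunction. If μ > 0, then ⟨H_μ(K)f, f⟩ ≥ E_min(K)·‖f‖² for every symmetric f, and consequently H_μ(K) has no eigenvalue z < E_min(K) with a symmetric eigenfunction. -/

import Mathlib

open MeasureTheory Real Filter
open scoped RealInnerProductSpace

noncomputable section

instance fact_two_pi_pos : Fact (0 < 2 * Real.pi) := ⟨by positivity⟩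

/-- The `d`-dimensional torus `(ℝ/2πℤ)^d`. -/
abbrev Torus (d : ℕ) : Type := Fin d → AddCircle (2 * Real.pi)

/-- Cosine as a function on the circle `ℝ/2πℤ`. -/
noncomputable def torusCos : AddCircle (2 * Real.pi) → ℝ := Real.cos_periodic.lift

/-- The one-particle dispersion `ε(p) = 2∑ᵢ (1 − cos pⁱ)` on the torus. -/
noncomputable def eps (d : ℕ) (p : Torus d) : ℝ := 2 * ∑ i, (1 - torusCos (p i))

/-- The normalized Haar measure `η` on the torus `T^d`. -/
noncomputable def η (d : ℕ) : Measure (Torus d) :=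
  Measure.pi fun _ => (AddCircle.haarAddCircle : Measure (AddCircle (2 * Real.pi)))

instance (d : ℕ) : IsProbabilityMeasure (η d) := by unfold η; infer_instance

/-- The two-particle fiber dispersion `𝓔ₖ(p) = ε(k−p) + ε(p)`. -/
noncomputable def calE (d : ℕ) (k p : Torus d) : ℝ := eps d (k - p) + eps d p

/-- `E_min(k) = min_{p ∈ T^d} 𝓔ₖ(p)`. -/
noncomputable def Emin (d : ℕ) (k : Torus d) : ℝ := sInf (Set.range (calE d k))

/-- `E_max(k) = max_{p ∈ T^d} 𝓔ₖ(p)`. -/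
noncomputable def Emax (d : ℕ) (k : Torus d) : ℝ := sSup (Set.range (calE d k))

/-- The three-particle dispersion `E(K;p,q) = ε(K−p−q) + ε(p) + ε(q)`. -/
noncomputable def EE (d : ℕ) (K p q : Torus d) : ℝ := eps d (K - p - q) + eps d p + eps d q

/-- `E_min(K) = min_{p,q ∈ T^d} E(K;p,q)`. -/
noncomputable def E3min (d : ℕ) (K : Torus d) : ℝ :=
  sInf (Set.range fun pq : Torus d × Torus d => EE d K pq.1 pq.2)

/-- `E_max(K) = max_{p,q ∈ T^d} E(K;p,q)`. -/
noncomputable def E3max (d : ℕ) (K : Torus d) : ℝ :=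
  sSup (Set.range fun pq : Torus d × Torus d => EE d K pq.1 pq.2)

/-- The two-particle determinant `Δ_μ(k;z) = 1 + μ ∫ (𝓔ₖ(q) − z)⁻¹ dη(q)`. -/
noncomputable def Delta2 (d : ℕ) (μ : ℝ) (k : Torus d) (z : ℝ) : ℝ :=
  1 + μ * ∫ q, (calE d k q - z)⁻¹ ∂(η d)

/-- The channel determinant `Δ_μ(K,p;z) = 1 + μ ∫ (E(K;p,q) − z)⁻¹ dη(q)`. -/
noncomputable def Delta3 (d : ℕ) (μ : ℝ) (K p : Torus d) (z : ℝ) : ℝ :=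
  1 + μ * ∫ q, (EE d K p q - z)⁻¹ ∂(η d)

/-- The point `π ∈ ℝ/2πℤ`. -/
noncomputable def piPt : AddCircle (2 * Real.pi) := ((Real.pi : ℝ) : AddCircle (2 * Real.pi))


/-!
For symmetric `f` put `g p = ∫ f (p, t) dt`. Each of the three pair-interaction terms of
`H_μ(K)` contributes exactly `‖g‖²` to the quadratic form: the first by Fubini, the second
after using `f (p, q) = f (q, p)`, the third after the measure-preserving change of variables
`(p, q) ↦ (K - p - q, q)`. Hence `⟪H_μ(K) f, f⟫ = ∫ E(K) |f|² + 3 μ ‖g‖²`, and the interaction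
has the sign of `μ`: the form is at most `E_max(K) ‖f‖²` for `μ < 0` and at least
`E_min(K) ‖f‖²` for `μ > 0`, while an eigenfunction for `z` has `⟪H_μ(K) f, f⟫ = z ‖f‖²`.
-/
namespace MeasureTheory

variable {α β : Type*} [MeasurableSpace α] [MeasurableSpace β] {μ : Measure α} {ν : Measure β}

lemma sq_integral_le_integral_sq [IsProbabilityMeasure ν] {u : β → ℝ} (hu : MemLp u 2 ν) :
    (∫ y, u y ∂ν) ^ 2 ≤ ∫ y, u y ^ 2 ∂ν := by
  have h := ProbabilityTheory.variance_eq_sub hu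
  have h0 := ProbabilityTheory.variance_nonneg u ν
  simp only [Pi.pow_apply] at h
  linarith

theorem MemLp.integral_prod_left [SFinite μ] [IsProbabilityMeasure ν] {F : α × β → ℝ}
    (hF : MemLp F 2 (μ.prod ν)) : MemLp (fun x => ∫ y, F (x, y) ∂ν) 2 μ := by
  have hmeas := hF.aestronglyMeasurable.integral_prod_right'
  refine (memLp_two_iff_integrable_sq hmeas).2 <|
    hF.integrable_sq.integral_prod_left.mono' (hmeas.pow 2) ?_
  filter_upwards [hF.aestronglyMeasurable.prodMk_left, hF.integrable_sq.prod_right_ae]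
    with x hx hx2
  rw [Real.norm_eq_abs, abs_of_nonneg (sq_nonneg _)]
  exact sq_integral_le_integral_sq <| (memLp_two_iff_integrable_sq hx).2 hx2

lemma integral_comp_fst_mul [SFinite μ] [IsFiniteMeasure ν] {φ : α → ℝ} {F : α × β → ℝ}
    (hφ : MemLp φ 2 μ) (hF : MemLp F 2 (μ.prod ν)) :
    ∫ z, φ z.1 * F z ∂(μ.prod ν) = ∫ x, φ x * ∫ y, F (x, y) ∂ν ∂μ := by
  rw [integral_prod (fun z => φ z.1 * F z) ((hφ.comp_fst ν).integrable_mul hF)]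
  simp_rw [integral_const_mul]

lemma integral_comp_snd_mul [IsFiniteMeasure μ] [SFinite ν] {φ : β → ℝ} {F : α × β → ℝ}
    (hφ : MemLp φ 2 ν) (hF : MemLp F 2 (μ.prod ν)) :
    ∫ z, φ z.2 * F z ∂(μ.prod ν) = ∫ y, φ y * ∫ x, F (x, y) ∂μ ∂ν := by
  rw [integral_prod_symm (fun z => φ z.2 * F z) ((hφ.comp_snd μ).integrable_mul hF)]
  simp_rw [integral_const_mul]

lemma ae_integral_prodMk_eq_of_swap [SFinite μ] {F : α × α → ℝ}
    (hF : ∀ᵐ z ∂(μ.prod μ), F z = F z.swap) :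
    (fun x => ∫ y, F (y, x) ∂μ) =ᵐ[μ] fun x => ∫ y, F (x, y) ∂μ := by
  filter_upwards [Measure.ae_ae_of_ae_prod hF] with x hx
  exact integral_congr_ae (hx.mono fun _ h => h.symm)

section Lp

variable {E : α → ℝ} {a b : ℝ}

lemma Lp.integral_sq_eq_norm_sq (f : Lp ℝ 2 μ) : ∫ x, f x ^ 2 ∂μ = ‖f‖ ^ 2 := by
  rw [← real_inner_self_eq_norm_sq, L2.inner_def]
  simp [sq]

lemma integrable_mul_sq_of_mem_Icc (hEm : AEStronglyMeasurable E μ)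
    (hE : ∀ x, E x ∈ Set.Icc a b) (f : Lp ℝ 2 μ) : Integrable (fun x => E x * f x ^ 2) μ :=
  (Lp.memLp f).integrable_sq.bdd_mul hEm
    (ae_of_all _ fun x => abs_le_max_abs_abs (hE x).1 (hE x).2)

lemma mul_norm_sq_le_integral_mul_sq (hEm : AEStronglyMeasurable E μ)
    (hE : ∀ x, E x ∈ Set.Icc a b) (f : Lp ℝ 2 μ) : a * ‖f‖ ^ 2 ≤ ∫ x, E x * f x ^ 2 ∂μ := by
  rw [← Lp.integral_sq_eq_norm_sq, ← integral_const_mul]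
  exact integral_mono ((Lp.memLp f).integrable_sq.const_mul a)
    (integrable_mul_sq_of_mem_Icc hEm hE f) fun x => by gcongr; exact (hE x).1

lemma integral_mul_sq_le_mul_norm_sq (hEm : AEStronglyMeasurable E μ)
    (hE : ∀ x, E x ∈ Set.Icc a b) (f : Lp ℝ 2 μ) : ∫ x, E x * f x ^ 2 ∂μ ≤ b * ‖f‖ ^ 2 := by
  rw [← Lp.integral_sq_eq_norm_sq, ← integral_const_mul]
  exact integral_mono (integrable_mul_sq_of_mem_Icc hEm hE f)
    ((Lp.memLp f).integrable_sq.const_mul b) fun x => by gcongr; exact (hE x).2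

end Lp

section ThreeBody

variable {G : Type*} [AddCommGroup G] [MeasurableSpace G] [MeasurableAdd₂ G] [MeasurableNeg G]
  {ν : Measure G}

lemma measurePreserving_sub_sub_fst [SFinite ν] [ν.IsAddLeftInvariant] [ν.IsNegInvariant]
    (K : G) : MeasurePreserving (fun z : G × G => (K - z.1 - z.2, z.2)) (ν.prod ν) (ν.prod ν) := by
  have hskew : MeasurePreserving (fun w : G × G => (w.1, K - w.1 - w.2)) (ν.prod ν) (ν.prod ν) :=
    (MeasurePreserving.id ν).skew_product (g := fun q p => K - q - p) (by fun_prop)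
      (ae_of_all _ fun q => (Measure.measurePreserving_sub_left ν (K - q)).map_eq)
  convert Measure.measurePreserving_swap.comp (hskew.comp Measure.measurePreserving_swap) using 2
  simp [sub_right_comm]

lemma integral_comp_sub_sub_mul [IsProbabilityMeasure ν] [ν.IsAddLeftInvariant]
    [ν.IsNegInvariant] (K : G) {φ : G → ℝ} {F : G × G → ℝ} (hφ : MemLp φ 2 ν)
    (hF : MemLp F 2 (ν.prod ν)) (hFK : ∀ᵐ z ∂(ν.prod ν), F z = F (K - z.1 - z.2, z.2)) :
    ∫ z, φ (K - z.1 - z.2) * F z ∂(ν.prod ν) = ∫ p, φ p * ∫ q, F (p, q) ∂ν ∂ν := by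
  have hτ := measurePreserving_sub_sub_fst (ν := ν) K
  have hinv : Function.Involutive fun z : G × G => (K - z.1 - z.2, z.2) := fun z =>
    Prod.ext (by simp [sub_sub]) rfl
  calc ∫ z, φ (K - z.1 - z.2) * F z ∂(ν.prod ν)
      = ∫ z, φ (K - z.1 - z.2) * F (K - z.1 - z.2, z.2) ∂(ν.prod ν) :=
        integral_congr_ae <| hFK.mono fun z hz => congrArg (φ (K - z.1 - z.2) * ·) hz
    _ = ∫ z, φ z.1 * F z ∂(ν.prod ν) :=
        hτ.integral_comp (MeasurableEquiv.ofInvolutive _ hinv hτ.measurable).measurableEmbedding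
          fun z => φ z.1 * F z
    _ = ∫ p, φ p * ∫ q, F (p, q) ∂ν ∂ν := integral_comp_fst_mul hφ hF

/-- The interaction `V` in `H_μ(K) = E(K) + μ V`, one term for each pair of particles. -/
def pairInteraction (ν : Measure G) (K : G) (F : G × G → ℝ) (z : G × G) : ℝ :=
  (∫ t, F (z.1, t) ∂ν) + (∫ t, F (t, z.2) ∂ν) + (∫ t, F (t, K - z.1 - z.2) ∂ν)

variable [IsProbabilityMeasure ν] [ν.IsAddLeftInvariant] [ν.IsNegInvariant]

lemma memLp_pairInteraction (K : G) {F : G × G → ℝ} (hF : MemLp F 2 (ν.prod ν)) :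
    MemLp (pairInteraction ν K F) 2 (ν.prod ν) := by
  have hg := hF.integral_prod_left
  have hh := (hF.comp_measurePreserving Measure.measurePreserving_swap).integral_prod_left
  exact ((hg.comp_fst ν).add (hh.comp_snd ν)).add
    ((hh.comp_fst ν).comp_measurePreserving (measurePreserving_sub_sub_fst K))

lemma integral_pairInteraction_mul (K : G) {F : G × G → ℝ} (hF : MemLp F 2 (ν.prod ν))
    (hsym : ∀ᵐ z ∂(ν.prod ν), F z = F (z.2, z.1) ∧ F z = F (K - z.1 - z.2, z.2)) :
    ∫ z, pairInteraction ν K F z * F z ∂(ν.prod ν) = 3 * ∫ p, (∫ t, F (p, t) ∂ν) ^ 2 ∂ν := by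
  set g := fun p => ∫ t, F (p, t) ∂ν
  set h := fun q => ∫ t, F (t, q) ∂ν
  have hg : MemLp g 2 ν := hF.integral_prod_left
  have hh : MemLp h 2 ν :=
    (hF.comp_measurePreserving Measure.measurePreserving_swap).integral_prod_left
  have hhg : h =ᵐ[ν] g := ae_integral_prodMk_eq_of_swap (hsym.mono fun _ h => h.1)
  have h1 : ∫ z, g z.1 * F z ∂(ν.prod ν) = ∫ p, g p * g p ∂ν := integral_comp_fst_mul hg hF
  have h2 : ∫ z, h z.2 * F z ∂(ν.prod ν) = ∫ p, g p * g p ∂ν :=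
    (integral_comp_snd_mul hh hF).trans <| integral_congr_ae <| hhg.mono fun p hp =>
      congrArg (fun x => x * x) hp
  have h3 : ∫ z, h (K - z.1 - z.2) * F z ∂(ν.prod ν) = ∫ p, g p * g p ∂ν :=
    (integral_comp_sub_sub_mul K hh hF (hsym.mono fun _ h => h.2)).trans <|
      integral_congr_ae <| hhg.mono fun p hp => congrArg (· * g p) hp
  have i1 : Integrable (fun z => g z.1 * F z) (ν.prod ν) := (hg.comp_fst ν).integrable_mul hF
  have i2 : Integrable (fun z => h z.2 * F z) (ν.prod ν) := (hh.comp_snd ν).integrable_mul hF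
  have i3 : Integrable (fun z => h (K - z.1 - z.2) * F z) (ν.prod ν) :=
    ((hh.comp_fst ν).comp_measurePreserving (measurePreserving_sub_sub_fst K)).integrable_mul hF
  calc ∫ z, pairInteraction ν K F z * F z ∂(ν.prod ν)
      = ∫ z, g z.1 * F z + h z.2 * F z + h (K - z.1 - z.2) * F z ∂(ν.prod ν) := by
        simp only [pairInteraction, add_mul]; rfl
    _ = 3 * ∫ p, g p ^ 2 ∂ν := by
        rw [integral_add (f := fun z => g z.1 * F z + h z.2 * F z) (i1.add i2) i3,
          integral_add i1 i2, h1, h2, h3]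
        simp only [sq]
        ring

lemma inner_eq_integral_add_pairInteraction (K : G) {E : G × G → ℝ} (c : ℝ)
    {u f : Lp ℝ 2 (ν.prod ν)}
    (hu : ⇑u =ᵐ[ν.prod ν] fun z => E z * f z + c * pairInteraction ν K f z)
    (hE : Integrable (fun z => E z * f z ^ 2) (ν.prod ν))
    (hsym : ∀ᵐ z ∂(ν.prod ν), f z = f (z.2, z.1) ∧ f z = f (K - z.1 - z.2, z.2)) :
    ⟪u, f⟫ = ∫ z, E z * f z ^ 2 ∂(ν.prod ν) + c * (3 * ∫ p, (∫ t, f (p, t) ∂ν) ^ 2 ∂ν) := by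
  have hV : Integrable (fun z => c * (pairInteraction ν K f z * f z)) (ν.prod ν) :=
    ((memLp_pairInteraction K (Lp.memLp f)).integrable_mul (Lp.memLp f)).const_mul c
  rw [L2.inner_def, ← integral_pairInteraction_mul K (Lp.memLp f) hsym, ← integral_const_mul,
    ← integral_add hE hV]
  refine integral_congr_ae (hu.mono fun z hz => ?_)
  simp only [hz, Real.inner_apply]
  ring

lemma inner_le_mul_norm_sq_of_neg (K : G) {E : G × G → ℝ} {a b c : ℝ} (hc : c < 0)
    (hEm : AEStronglyMeasurable E (ν.prod ν)) (hE : ∀ z, E z ∈ Set.Icc a b)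
    {u f : Lp ℝ 2 (ν.prod ν)}
    (hu : ⇑u =ᵐ[ν.prod ν] fun z => E z * f z + c * pairInteraction ν K f z)
    (hsym : ∀ᵐ z ∂(ν.prod ν), f z = f (z.2, z.1) ∧ f z = f (K - z.1 - z.2, z.2)) :
    ⟪u, f⟫ ≤ b * ‖f‖ ^ 2 := by
  rw [inner_eq_integral_add_pairInteraction K c hu (integrable_mul_sq_of_mem_Icc hEm hE f) hsym]
  have hg : 0 ≤ ∫ p, (∫ t, f (p, t) ∂ν) ^ 2 ∂ν := integral_nonneg fun _ => sq_nonneg _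
  nlinarith [integral_mul_sq_le_mul_norm_sq hEm hE f]

lemma mul_norm_sq_le_inner_of_pos (K : G) {E : G × G → ℝ} {a b c : ℝ} (hc : 0 < c)
    (hEm : AEStronglyMeasurable E (ν.prod ν)) (hE : ∀ z, E z ∈ Set.Icc a b)
    {u f : Lp ℝ 2 (ν.prod ν)}
    (hu : ⇑u =ᵐ[ν.prod ν] fun z => E z * f z + c * pairInteraction ν K f z)
    (hsym : ∀ᵐ z ∂(ν.prod ν), f z = f (z.2, z.1) ∧ f z = f (K - z.1 - z.2, z.2)) :
    a * ‖f‖ ^ 2 ≤ ⟪u, f⟫ := by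
  rw [inner_eq_integral_add_pairInteraction K c hu (integrable_mul_sq_of_mem_Icc hEm hE f) hsym]
  have hg : 0 ≤ ∫ p, (∫ t, f (p, t) ∂ν) ^ 2 ∂ν := integral_nonneg fun _ => sq_nonneg _
  nlinarith [mul_norm_sq_le_integral_mul_sq hEm hE f]

end ThreeBody

end MeasureTheory

section Eigenvalue

variable {V : Type*} [NormedAddCommGroup V] [InnerProductSpace ℝ V] {u f : V} {z c : ℝ}

lemma le_of_eq_smul_of_inner_le (hf : f ≠ 0) (hu : u = z • f) (h : ⟪u, f⟫ ≤ c * ‖f‖ ^ 2) :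
    z ≤ c := by
  rw [hu, real_inner_smul_left, real_inner_self_eq_norm_sq] at h
  exact le_of_mul_le_mul_right h (by positivity)

lemma le_of_eq_smul_of_le_inner (hf : f ≠ 0) (hu : u = z • f) (h : c * ‖f‖ ^ 2 ≤ ⟪u, f⟫) :
    c ≤ z := by
  rw [hu, real_inner_smul_left, real_inner_self_eq_norm_sq] at h
  exact le_of_mul_le_mul_right h (by positivity)

end Eigenvalue

instance (d : ℕ) : (η d).IsAddHaarMeasure := by unfold η; infer_instance

instance (d : ℕ) : (η d).IsNegInvariant :=
  Measure.IsAddHaarMeasure.isNegInvariant_of_regular (η d)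

@[fun_prop]
lemma continuous_torusCos : Continuous torusCos :=
  (QuotientAddGroup.isQuotientMap_mk _).continuous_iff.mpr <|
    continuous_cos.congr fun x => (Real.cos_periodic.lift_coe x).symm

lemma continuous_EE (d : ℕ) (K : Torus d) :
    Continuous fun z : Torus d × Torus d => EE d K z.1 z.2 := by
  unfold EE eps; fun_prop

lemma EE_mem_Icc (d : ℕ) (K : Torus d) (z : Torus d × Torus d) :
    EE d K z.1 z.2 ∈ Set.Icc (E3min d K) (E3max d K) :=
  have hcpt := isCompact_range (continuous_EE d K)
  ⟨csInf_le hcpt.bddBelow ⟨z, rfl⟩, le_csSup hcpt.bddAbove ⟨z, rfl⟩⟩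

theorem no_bound_state_on_wrong_side_general (d : ℕ) (μ : ℝ) (K : Torus d)
    (H : Lp ℝ 2 ((η d).prod (η d)) →L[ℝ] Lp ℝ 2 ((η d).prod (η d)))
    (hact : ∀ f : Lp ℝ 2 ((η d).prod (η d)),
      ⇑(H f) =ᵐ[(η d).prod (η d)] fun pq =>
        EE d K pq.1 pq.2 * f pq +
          μ * ((∫ t, f (pq.1, t) ∂(η d)) + (∫ t, f (t, pq.2) ∂(η d)) +
                (∫ t, f (t, K - pq.1 - pq.2) ∂(η d)))) :
    (μ < 0 →
      (∀ f : Lp ℝ 2 ((η d).prod (η d)),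
        (∀ᵐ pq ∂((η d).prod (η d)),
          f pq = f (pq.2, pq.1) ∧ f pq = f (K - pq.1 - pq.2, pq.2)) →
        ⟪H f, f⟫ ≤ E3max d K * ‖f‖ ^ 2) ∧
      (∀ z : ℝ, E3max d K < z →
        ¬ ∃ f : Lp ℝ 2 ((η d).prod (η d)), f ≠ 0 ∧
          (∀ᵐ pq ∂((η d).prod (η d)),
            f pq = f (pq.2, pq.1) ∧ f pq = f (K - pq.1 - pq.2, pq.2)) ∧
          H f = z • f)) ∧
    (0 < μ →
      (∀ f : Lp ℝ 2 ((η d).prod (η d)),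
        (∀ᵐ pq ∂((η d).prod (η d)),
          f pq = f (pq.2, pq.1) ∧ f pq = f (K - pq.1 - pq.2, pq.2)) →
        E3min d K * ‖f‖ ^ 2 ≤ ⟪H f, f⟫) ∧
      (∀ z : ℝ, z < E3min d K →
        ¬ ∃ f : Lp ℝ 2 ((η d).prod (η d)), f ≠ 0 ∧
          (∀ᵐ pq ∂((η d).prod (η d)),
            f pq = f (pq.2, pq.1) ∧ f pq = f (K - pq.1 - pq.2, pq.2)) ∧
          H f = z • f)) := by
  have hEm := (continuous_EE d K).aestronglyMeasurable (μ := (η d).prod (η d))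
  have hE := EE_mem_Icc d K
  refine ⟨fun hμ => ⟨fun f hf => inner_le_mul_norm_sq_of_neg K hμ hEm hE (hact f) hf, ?_⟩,
    fun hμ => ⟨fun f hf => mul_norm_sq_le_inner_of_pos K hμ hEm hE (hact f) hf, ?_⟩⟩
  · rintro z hz ⟨f, hf0, hf, hfz⟩
    exact hz.not_ge <| le_of_eq_smul_of_inner_le hf0 hfz <|
      inner_le_mul_norm_sq_of_neg K hμ hEm hE (hact f) hf
  · rintro z hz ⟨f, hf0, hf, hfz⟩
    exact hz.not_ge <| le_of_eq_smul_of_le_inner hf0 hfz <|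
      mul_norm_sq_le_inner_of_pos K hμ hEm hE (hact f) hf

/-- main theorem, part (iii): for `μ < 0` the quadratic form of `H_μ(K)`
on symmetric functions is bounded above by `E_max(K)‖f‖²`, so `H_μ(K)` has no eigenvalue
above `E_max(K)` with a symmetric eigenfunction; dually for `μ > 0` with `E_min(K)`. -/
theorem no_bound_state_on_wrong_side (d : ℕ) (hd : 1 ≤ d) (μ : ℝ) (K : Torus d)
    (H : Lp ℝ 2 ((η d).prod (η d)) →L[ℝ] Lp ℝ 2 ((η d).prod (η d)))
    (hact : ∀ f : Lp ℝ 2 ((η d).prod (η d)),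
      ⇑(H f) =ᵐ[(η d).prod (η d)] fun pq =>
        EE d K pq.1 pq.2 * f pq +
          μ * ((∫ t, f (pq.1, t) ∂(η d)) + (∫ t, f (t, pq.2) ∂(η d)) +
                (∫ t, f (t, K - pq.1 - pq.2) ∂(η d)))) :
    (μ < 0 →
      (∀ f : Lp ℝ 2 ((η d).prod (η d)),
        (∀ᵐ pq ∂((η d).prod (η d)),
          f pq = f (pq.2, pq.1) ∧ f pq = f (K - pq.1 - pq.2, pq.2)) →
        ⟪H f, f⟫ ≤ E3max d K * ‖f‖ ^ 2) ∧
      (∀ z : ℝ, E3max d K < z →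
        ¬ ∃ f : Lp ℝ 2 ((η d).prod (η d)), f ≠ 0 ∧
          (∀ᵐ pq ∂((η d).prod (η d)),
            f pq = f (pq.2, pq.1) ∧ f pq = f (K - pq.1 - pq.2, pq.2)) ∧
          H f = z • f)) ∧
    (0 < μ →
      (∀ f : Lp ℝ 2 ((η d).prod (η d)),
        (∀ᵐ pq ∂((η d).prod (η d)),
          f pq = f (pq.2, pq.1) ∧ f pq = f (K - pq.1 - pq.2, pq.2)) →
        E3min d K * ‖f‖ ^ 2 ≤ ⟪H f, f⟫) ∧
      (∀ z : ℝ, z < E3min d K →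
        ¬ ∃ f : Lp ℝ 2 ((η d).prod (η d)), f ≠ 0 ∧
          (∀ᵐ pq ∂((η d).prod (η d)),
            f pq = f (pq.2, pq.1) ∧ f pq = f (K - pq.1 - pq.2, pq.2)) ∧
          H f = z • f)) :=
  no_bound_state_on_wrong_side_general d μ K H hact
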